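/- Consider the Lie algebra L_{9,1}^{p,q} with pq ≠ 0 and nonzero brackets [X_1,X_2]=X_3, [X_1,X_3]=−X_2, [X_2,X_3]=X_1, [X_1,X_5]=X_6, [X_1,X_6]=X_5, [X_2,X_4]=−X_6, [X_2,X_6]=X_4, [X_3,X_4]=X_5, [X_3,X_5]=−X_4, [X_4,X_9]=X_4, [X_5,X_9]=X_5, [X_6,X_9]=X_6, [X_7,X_9]=pX_7, [X_8,X_9]=qX_8. The functions J_1 = x_4²+x_5²+x_6², J_2 = x_1 x_4 + x_2 x_5 + x_3 x_6, J_3 = x_7, J_4 = x_8 satisfy the semi-invariance conditions \hat{X}_9(J_1) = −2J_1, \hat{X}_9(J_2) = −J_2, \hat{X}_9(J_3) = −p J_3, \hat{X}_9(J_4) = −q J_4. -/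

import Mathlib

open Finset

noncomputable def Xhat (C : Fin 9 → Fin 9 → Fin 9 → ℝ) (i : Fin 9)
    (F : (Fin 9 → ℝ) → ℝ) : (Fin 9 → ℝ) → ℝ :=
  fun x => ∑ j : Fin 9, (∑ k : Fin 9, C i j k * x k) * fderiv ℝ F x (Pi.single j 1)

noncomputable def Lhalf (p q : ℝ) : Fin 9 → Fin 9 → Fin 9 → ℝ := fun i j k =>
  if (i, j, k) = ((0 : Fin 9), (1 : Fin 9), (2 : Fin 9)) then (1 : ℝ) else
  if (i, j, k) = ((0 : Fin 9), (2 : Fin 9), (1 : Fin 9)) then (-1 : ℝ) else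
  if (i, j, k) = ((1 : Fin 9), (2 : Fin 9), (0 : Fin 9)) then (1 : ℝ) else
  if (i, j, k) = ((0 : Fin 9), (4 : Fin 9), (5 : Fin 9)) then (1 : ℝ) else
  if (i, j, k) = ((0 : Fin 9), (5 : Fin 9), (4 : Fin 9)) then (1 : ℝ) else
  if (i, j, k) = ((1 : Fin 9), (3 : Fin 9), (5 : Fin 9)) then (-1 : ℝ) else
  if (i, j, k) = ((1 : Fin 9), (5 : Fin 9), (3 : Fin 9)) then (1 : ℝ) else
  if (i, j, k) = ((2 : Fin 9), (3 : Fin 9), (4 : Fin 9)) then (1 : ℝ) else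
  if (i, j, k) = ((2 : Fin 9), (4 : Fin 9), (3 : Fin 9)) then (-1 : ℝ) else
  if (i, j, k) = ((3 : Fin 9), (8 : Fin 9), (3 : Fin 9)) then (1 : ℝ) else
  if (i, j, k) = ((4 : Fin 9), (8 : Fin 9), (4 : Fin 9)) then (1 : ℝ) else
  if (i, j, k) = ((5 : Fin 9), (8 : Fin 9), (5 : Fin 9)) then (1 : ℝ) else
  if (i, j, k) = ((6 : Fin 9), (8 : Fin 9), (6 : Fin 9)) then (p : ℝ) else
  if (i, j, k) = ((7 : Fin 9), (8 : Fin 9), (7 : Fin 9)) then (q : ℝ) else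
  0

noncomputable def C (p q : ℝ) (i j k : Fin 9) : ℝ := Lhalf p q i j k - Lhalf p q j i k

noncomputable def J₁ : (Fin 9 → ℝ) → ℝ := fun x => (x 3)^2 + (x 4)^2 + (x 5)^2
noncomputable def J₂ : (Fin 9 → ℝ) → ℝ := fun x => x 0 * x 3 + x 1 * x 4 + x 2 * x 5
noncomputable def J₃ : (Fin 9 → ℝ) → ℝ := fun x => x 6
noncomputable def J₄ : (Fin 9 → ℝ) → ℝ := fun x => x 7

/-! Only the brackets `[X_j, X_9]` contribute to `\hat{X}_9`, so it is the diagonal linear field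
`-(x_4 ∂_4 + x_5 ∂_5 + x_6 ∂_6 + p x_7 ∂_7 + q x_8 ∂_8)`. By Euler's identity each `J_i`, being
weighted-homogeneous for these weights, is an eigenfunction with eigenvalue minus its weighted degree. -/

lemma Xhat_apply (C : Fin 9 → Fin 9 → Fin 9 → ℝ) (i : Fin 9) (F : (Fin 9 → ℝ) → ℝ)
    (x : Fin 9 → ℝ) : Xhat C i F x = fderiv ℝ F x (fun j => ∑ k, C i j k * x k) := by
  conv_rhs => rw [pi_eq_sum_univ' (fun j => ∑ k, C i j k * x k)]
  simp [Xhat, map_sum]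

lemma sum_C_eight_mul (p q : ℝ) (x : Fin 9 → ℝ) :
    (fun j => ∑ k, C p q 8 j k * x k) = -![0, 0, 0, x 3, x 4, x 5, p * x 6, q * x 7, 0] := by
  funext j
  fin_cases j <;> simp [C, Lhalf]

lemma fderiv_eval_apply {ι : Type*} [Fintype ι] (i : ι) (x v : ι → ℝ) :
    fderiv ℝ (fun y : ι → ℝ => y i) x v = v i := by
  simp [(hasFDerivAt_apply i x).fderiv]

lemma fderiv_J₁_apply (x v : Fin 9 → ℝ) :
    fderiv ℝ J₁ x v = 2 * (x 3 * v 3 + x 4 * v 4 + x 5 * v 5) := by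
  have hx (i : Fin 9) := hasFDerivAt_apply (𝕜 := ℝ) i x
  rw [HasFDerivAt.fderiv (f := J₁) ((((hx 3).pow 2).add ((hx 4).pow 2)).add ((hx 5).pow 2))]
  simp only [add_apply, smul_apply, ContinuousLinearMap.proj_apply, smul_eq_mul, nsmul_eq_mul,
    Nat.cast_ofNat]
  ring

lemma fderiv_J₂_apply (x v : Fin 9 → ℝ) :
    fderiv ℝ J₂ x v = x 0 * v 3 + x 3 * v 0 + x 1 * v 4 + x 4 * v 1 + x 2 * v 5 + x 5 * v 2 := by
  have hx (i : Fin 9) := hasFDerivAt_apply (𝕜 := ℝ) i x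
  rw [HasFDerivAt.fderiv (f := J₂)
    ((((hx 0).mul (hx 3)).add ((hx 1).mul (hx 4))).add ((hx 2).mul (hx 5)))]
  simp only [add_apply, smul_apply, ContinuousLinearMap.proj_apply, smul_eq_mul]
  ring

lemma fderiv_J₃_apply (x v : Fin 9 → ℝ) : fderiv ℝ J₃ x v = v 6 :=
  fderiv_eval_apply 6 x v

lemma fderiv_J₄_apply (x v : Fin 9 → ℝ) : fderiv ℝ J₄ x v = v 7 :=
  fderiv_eval_apply 7 x v

theorem semiinvariance_L9_1_general (p q : ℝ) :
    ∀ x : Fin 9 → ℝ,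
      Xhat (C p q) 8 J₁ x = -2 * J₁ x ∧
      Xhat (C p q) 8 J₂ x = - J₂ x ∧
      Xhat (C p q) 8 J₃ x = -p * J₃ x ∧
      Xhat (C p q) 8 J₄ x = -q * J₄ x := by
  intro x
  simp only [Xhat_apply, sum_C_eight_mul, fderiv_J₁_apply, fderiv_J₂_apply,
    fderiv_J₃_apply, fderiv_J₄_apply, Pi.neg_apply, Matrix.cons_val, J₁, J₂, J₃, J₄]
  exact ⟨by ring, by ring, by ring, by ring⟩

theorem semiinvariance_L9_1 (p q : ℝ) (hp : p ≠ 0) (hq : q ≠ 0) :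
    ∀ x : Fin 9 → ℝ,
      Xhat (C p q) 8 J₁ x = -2 * J₁ x ∧
      Xhat (C p q) 8 J₂ x = - J₂ x ∧
      Xhat (C p q) 8 J₃ x = -p * J₃ x ∧
      Xhat (C p q) 8 J₄ x = -q * J₄ x :=
  semiinvariance_L9_1_general p q
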